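/- For every r̂ ∈ ℕ and every integer m ≥ 1, Var(μ^(b^m·r̂ + 1)) = (1 − 1/b^m)·Var(μ^(r̂)) + (1/b^m)·Var(μ^(r̂+1)) + b − 1/b^{m−1}. -/

import Mathlib

open Filter Topology MeasureTheory

noncomputable section

/-- Sum of the base-`b` digits of `n`. -/
def digitSum (b n : ℕ) : ℕ := (Nat.digits b n).sum

/-- `Δ^(r)(n) = s(n+r) - s(n)`, the variation of the base-`b` digit sum when adding `r`. -/
def delta (b r n : ℕ) : ℤ := (digitSum b (n + r) : ℤ) - (digitSum b n : ℤ)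

/-!
Cut `n = b^j q + c` into the block `c < b^j` of its last `j` digits and the rest `q`. The
digit sum is additive across the cut, so adding `b^j r̂ + a` changes it by
`Δ^(r̂ + ⌊(c + a)/b^j⌋)(q)` plus the change `s((c + a) mod b^j) - s(c)` of the block alone.
Averaging over `c` writes `μ^(b^j r̂ + a)` as the mean of `b^j` translates of `μ^(r̂)` and
`μ^(r̂+1)`. With `r̂ = 0` this forces the total mass and the mean of `μ^(r)` to be independent of
`r` (the block changes sum to zero over a full period), hence equal to those of the point mass
`μ^(0)`. With `a = 1, j = m` the second moment is then the average of the variances plus the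
average square of the block changes, and these squares sum to `b^(m+1) - b` by induction on `m`.
-/

open Finset

theorem sum_range_mul_eq_sum_sum {M : Type*} [AddCommMonoid M] (F : ℕ → M) (K Q : ℕ) :
    ∑ n ∈ range (K * Q), F n = ∑ q ∈ range Q, ∑ c ∈ range K, F (K * q + c) := by
  induction Q with
  | zero => simp
  | succ Q ih => rw [mul_add_one, sum_range_add, ih, sum_range_succ]

theorem sum_range_mod_add {M : Type*} [AddCommMonoid M] (F : ℕ → M) (K a : ℕ) :
    ∑ c ∈ range K, F ((c + a) % K) = ∑ c ∈ range K, F c := by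
  induction a with
  | zero => exact sum_congr rfl fun c hc => by rw [add_zero, Nat.mod_eq_of_lt (mem_range.mp hc)]
  | succ a ih =>
    rw [← ih]
    rcases K with _ | K
    · simp
    rw [sum_range_succ, sum_range_succ', show K + (a + 1) = a + (K + 1) by ring, Nat.add_mod_right,
      zero_add]
    simp only [← add_assoc, Nat.add_right_comm _ 1 a]

theorem sum_range_add_one_div {M : Type*} [AddCommMonoid M] (F : ℕ → M) {K : ℕ} (hK : 0 < K) :
    ∑ c ∈ range K, F ((c + 1) / K) = (K - 1) • F 0 + F 1 := by
  obtain ⟨K, rfl⟩ := Nat.exists_eq_add_of_lt hK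
  rw [zero_add, sum_range_succ, Nat.div_self K.succ_pos, Nat.add_sub_cancel,
    sum_congr rfl fun c hc => by rw [Nat.div_eq_of_lt (by simpa using hc)], sum_const, card_range]

/-- The digit-sum change of a block `c` of final digits when `a` is added to it and the carry out
of the block is dropped. -/
def blockDelta (b K a c : ℕ) : ℤ := digitSum b ((c + a) % K) - digitSum b c

section Digits

variable {b : ℕ}

theorem digitSum_add_mul (hb : 1 < b) {c : ℕ} (hc : c < b) (q : ℕ) :
    digitSum b (c + b * q) = c + digitSum b q := by
  by_cases h : c ≠ 0 ∨ q ≠ 0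
  · rw [digitSum, Nat.digits_add b hb c q hc h, List.sum_cons, digitSum]
  · obtain ⟨rfl, rfl⟩ : c = 0 ∧ q = 0 := by simpa using h
    simp [digitSum]

theorem digitSum_eq_mod_pow_add_div_pow (hb : 1 < b) (j n : ℕ) :
    digitSum b n = digitSum b (n % b ^ j) + digitSum b (n / b ^ j) := by
  induction j generalizing n with
  | zero => simp [digitSum, Nat.mod_one]
  | succ j ih =>
    conv_lhs => rw [← Nat.mod_add_div n b, digitSum_add_mul hb (Nat.mod_lt n (by omega)), ih]
    rw [pow_succ', Nat.mod_mul, digitSum_add_mul hb (Nat.mod_lt n (by omega)),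
      Nat.div_div_eq_div_mul, add_assoc]

theorem digitSum_pow_mul_add (hb : 1 < b) {j c : ℕ} (hc : c < b ^ j) (q : ℕ) :
    digitSum b (b ^ j * q + c) = digitSum b q + digitSum b c := by
  have hpos : 0 < b ^ j := by positivity
  rw [digitSum_eq_mod_pow_add_div_pow hb j, Nat.mul_add_mod, Nat.mod_eq_of_lt hc,
    Nat.mul_add_div hpos, Nat.div_eq_of_lt hc, add_zero, add_comm]

theorem delta_pow_mul_add (hb : 1 < b) {j c : ℕ} (hc : c < b ^ j) (r a q : ℕ) :
    delta b (b ^ j * r + a) (b ^ j * q + c) =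
      delta b (r + (c + a) / b ^ j) q + blockDelta b (b ^ j) a c := by
  have hsplit : b ^ j * q + c + (b ^ j * r + a) =
      b ^ j * (q + (r + (c + a) / b ^ j)) + (c + a) % b ^ j := by
    linarith [Nat.div_add_mod (c + a) (b ^ j)]
  unfold delta blockDelta
  rw [hsplit, digitSum_pow_mul_add hb (Nat.mod_lt _ (by positivity)), digitSum_pow_mul_add hb hc]
  push_cast
  ring

theorem sum_blockDelta_eq_zero (K a : ℕ) : ∑ c ∈ range K, blockDelta b K a c = 0 := by
  simp only [blockDelta, sum_sub_distrib, sum_range_mod_add (fun c => (digitSum b c : ℤ)), sub_self]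

theorem blockDelta_one_mul_add_of_lt (hb : 1 < b) {m q e : ℕ} (hq : q < b ^ m) (he : e + 1 < b) :
    blockDelta b (b ^ (m + 1)) 1 (b * q + e) = 1 := by
  have hlt : b * q + e + 1 < b ^ (m + 1) := by
    rw [pow_succ']
    nlinarith
  rw [blockDelta, Nat.mod_eq_of_lt hlt, add_assoc, add_comm (b * q), digitSum_add_mul hb he,
    add_comm (b * q), digitSum_add_mul hb (by omega)]
  push_cast
  ring

theorem blockDelta_one_mul_add_pred (hb : 1 < b) (m q : ℕ) :
    blockDelta b (b ^ (m + 1)) 1 (b * q + (b - 1)) = blockDelta b (b ^ m) 1 q - (b - 1) := by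
  have hcarry : b * q + (b - 1) + 1 = 0 + b * (q + 1) := by
    rw [mul_add_one]
    omega
  rw [blockDelta, blockDelta, hcarry, zero_add, pow_succ', Nat.mul_mod_mul_left,
    ← zero_add (b * _), digitSum_add_mul hb (by omega), add_comm (b * q),
    digitSum_add_mul hb (by omega)]
  push_cast [Nat.cast_sub hb.le]
  ring

theorem sum_range_blockDelta_one_mul_add_sq (hb : 1 < b) {m q : ℕ} (hq : q < b ^ m) :
    ∑ e ∈ range b, blockDelta b (b ^ (m + 1)) 1 (b * q + e) ^ 2 =
      (b - 1) + (blockDelta b (b ^ m) 1 q - (b - 1)) ^ 2 := by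
  rw [show range b = range (b - 1 + 1) by rw [Nat.sub_add_cancel hb.le], sum_range_succ,
    blockDelta_one_mul_add_pred hb,
    sum_congr rfl fun e he =>
      by rw [blockDelta_one_mul_add_of_lt hb hq (by have := mem_range.mp he; omega)]]
  simp [Nat.cast_sub hb.le]

theorem sum_blockDelta_one_sq (hb : 1 < b) (m : ℕ) :
    ∑ c ∈ range (b ^ m), blockDelta b (b ^ m) 1 c ^ 2 = (b : ℤ) ^ (m + 1) - b := by
  induction m with
  | zero => simp [blockDelta]
  | succ m ih =>
    rw [show range (b ^ (m + 1)) = range (b * b ^ m) by rw [pow_succ'], sum_range_mul_eq_sum_sum,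
      sum_congr rfl fun q hq => sum_range_blockDelta_one_mul_add_sq hb (mem_range.mp hq)]
    simp only [sub_sq, sum_add_distrib, sum_sub_distrib, ← sum_mul, ← mul_sum, ih,
      sum_blockDelta_eq_zero, sum_const, card_range, nsmul_eq_mul]
    push_cast
    ring

end Digits

theorem apply_eq_apply_zero_of_pow_mul_eq_sum {b : ℕ} (hb : 1 < b) {F : ℕ → ℝ}
    (hF : ∀ j r, r < b ^ j → (b : ℝ) ^ j * F r = ∑ c ∈ range (b ^ j), F ((c + r) / b ^ j))
    (r : ℕ) : F r = F 0 := by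
  have hb' : (1 : ℝ) < b := by exact_mod_cast hb
  have h1 : F 1 = F 0 := by
    have h := hF 1 1 (by simpa using hb)
    rw [pow_one, pow_one, sum_range_add_one_div F (by omega), nsmul_eq_mul,
      Nat.cast_pred (by omega)] at h
    have : ((b : ℝ) - 1) * (F 1 - F 0) = 0 := by linarith
    simpa [sub_eq_zero, (by linarith : (b : ℝ) - 1 ≠ 0)] using this
  have hcarry : ∀ c ∈ range (b ^ r), F ((c + r) / b ^ r) = F 0 := by
    intro c hc
    have : (c + r) / b ^ r < 2 := Nat.div_lt_of_lt_mul <| by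
      have := mem_range.mp hc
      have := Nat.lt_pow_self (n := r) hb
      omega
    interval_cases h : (c + r) / b ^ r
    · rfl
    · exact h1
  have h := hF r r (Nat.lt_pow_self hb)
  rw [sum_congr rfl hcarry, sum_const, card_range, nsmul_eq_mul] at h
  push_cast at h
  exact mul_left_cancel₀ (by positivity) h

theorem hasSum_intCast_add_mul {p : ℤ → ℝ} {m₀ m₁ : ℝ} (h₀ : HasSum p m₀)
    (h₁ : HasSum (fun d : ℤ => (d : ℝ) * p d) m₁) (g : ℤ) :
    HasSum (fun d : ℤ => ((d + g : ℤ) : ℝ) * p d) (m₁ + g * m₀) := by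
  convert h₁.add (h₀.mul_left (g : ℝ)) using 1
  ext d
  push_cast
  ring

theorem hasSum_intCast_add_sq_mul {p : ℤ → ℝ} {m₀ m₁ m₂ : ℝ} (h₀ : HasSum p m₀)
    (h₁ : HasSum (fun d : ℤ => (d : ℝ) * p d) m₁) (h₂ : HasSum (fun d : ℤ => (d : ℝ) ^ 2 * p d) m₂)
    (g : ℤ) :
    HasSum (fun d : ℤ => ((d + g : ℤ) : ℝ) ^ 2 * p d) (m₂ + 2 * g * m₁ + g ^ 2 * m₀) := by
  convert (h₂.add (h₁.mul_left (2 * g : ℝ))).add (h₀.mul_left ((g : ℝ) ^ 2)) using 1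
  ext d
  push_cast
  ring

def IsDeltaDensity (b : ℕ) (μ : ℕ → ℤ → ℝ) : Prop :=
  ∀ r d, Tendsto (fun N : ℕ => (#{n ∈ range N | delta b r n = d} : ℝ) / N) atTop (𝓝 (μ r d))

theorem card_filter_range_mul (K Q : ℕ) (P : ℕ → Prop) [DecidablePred P] :
    #{n ∈ range (K * Q) | P n} = ∑ c ∈ range K, #{q ∈ range Q | P (K * q + c)} := by
  simp only [card_filter]
  rw [sum_range_mul_eq_sum_sum, sum_comm]

namespace IsDeltaDensity

variable {b : ℕ} {μ : ℕ → ℤ → ℝ}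

theorem nonneg (hμ : IsDeltaDensity b μ) (r : ℕ) (d : ℤ) : 0 ≤ μ r d :=
  ge_of_tendsto' (hμ r d) fun N => by positivity

theorem zero_apply (hμ : IsDeltaDensity b μ) (d : ℤ) : μ 0 d = if d = 0 then 1 else 0 := by
  have hΔ : ∀ n, delta b 0 n = 0 := fun n => by simp [delta]
  refine tendsto_nhds_unique (hμ 0 d) ?_
  split_ifs with hd
  · simp only [hΔ, hd, filter_true, card_range]
    exact (tendsto_const_nhds (x := (1 : ℝ))).congr'
      (eventually_atTop.2 ⟨1, fun N hN => (div_self (by positivity)).symm⟩)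
  · simp [hΔ, Ne.symm hd]

theorem eq_sum_div (hμ : IsDeltaDensity b μ) {K r : ℕ} (hK : 0 < K) {f : ℕ → ℕ} {g : ℕ → ℤ}
    (hfg : ∀ c < K, ∀ q, delta b r (K * q + c) = delta b (f c) q + g c) (d : ℤ) :
    μ r d = (∑ c ∈ range K, μ (f c) (d - g c)) / K := by
  have hcount : ∀ Q, (#{n ∈ range (K * Q) | delta b r n = d} : ℝ) / (K * Q : ℕ) =
      (∑ c ∈ range K, (#{q ∈ range Q | delta b (f c) q = d - g c} : ℝ) / Q) / K := by
    intro Q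
    have hfiber : ∀ c ∈ range K, #{q ∈ range Q | delta b r (K * q + c) = d} =
        #{q ∈ range Q | delta b (f c) q = d - g c} := fun c hc => by
      congr 1
      exact filter_congr fun q _ => by rw [hfg c (mem_range.mp hc), eq_sub_iff_add_eq]
    rw [card_filter_range_mul, sum_congr rfl hfiber, Nat.cast_sum, Nat.cast_mul, mul_comm,
      ← div_div, sum_div]
  have hKQ : Tendsto (fun Q : ℕ => K * Q) atTop atTop :=
    tendsto_id.const_mul_atTop' hK
  refine tendsto_nhds_unique ((hμ r d).comp hKQ) ?_
  simp only [Function.comp_def, hcount]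
  exact (tendsto_finsetSum _ fun c _ => hμ (f c) (d - g c)).div_const _

theorem hasSum_mul_of_decomp (hμ : IsDeltaDensity b μ) {K r : ℕ} (hK : 0 < K) {f : ℕ → ℕ}
    {g : ℕ → ℤ} (hfg : ∀ c < K, ∀ q, delta b r (K * q + c) = delta b (f c) q + g c)
    {ψ : ℤ → ℝ} {S : ℕ → ℝ}
    (hS : ∀ c ∈ range K, HasSum (fun d => ψ (d + g c) * μ (f c) d) (S c)) :
    HasSum (fun d => ψ d * μ r d) ((∑ c ∈ range K, S c) / K) := by
  have hshift : ∀ c ∈ range K, HasSum (fun d => ψ d * μ (f c) (d - g c)) (S c) := fun c hc =>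
    (Equiv.addRight (g c)).hasSum_iff.mp (by simpa [Function.comp_def] using hS c hc)
  have hsplit : (fun d => ψ d * μ r d) =
      fun d => (∑ c ∈ range K, ψ d * μ (f c) (d - g c)) / K := by
    ext d
    rw [hμ.eq_sum_div hK hfg, mul_div_assoc', mul_sum]
  rw [hsplit]
  exact (hasSum_sum hshift).div_const _

theorem hasSum_mul_pow_mul_add (hμ : IsDeltaDensity b μ) (hb : 1 < b) {j r a : ℕ} {ψ : ℤ → ℝ}
    {S : ℕ → ℝ} (hS : ∀ c ∈ range (b ^ j),
      HasSum (fun d => ψ (d + blockDelta b (b ^ j) a c) * μ (r + (c + a) / b ^ j) d) (S c)) :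
    HasSum (fun d => ψ d * μ (b ^ j * r + a) d) ((∑ c ∈ range (b ^ j), S c) / (b : ℝ) ^ j) := by
  have h := hμ.hasSum_mul_of_decomp (by positivity)
    (fun c hc q => delta_pow_mul_add hb hc r a q) hS
  rwa [Nat.cast_pow] at h

theorem summable (hμ : IsDeltaDensity b μ) {r : ℕ}
    (hsq : Summable fun d : ℤ => (d : ℝ) ^ 2 * μ r d) : Summable (μ r) := by
  refine (hsq.add (hasSum_ite_eq 0 (μ r 0)).summable).of_nonneg_of_le (hμ.nonneg r) fun d => ?_
  rcases eq_or_ne d 0 with rfl | hd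
  · simp
  · have : (1 : ℝ) ≤ (d : ℝ) ^ 2 :=
      (one_le_sq_iff_one_le_abs _).mpr (by exact_mod_cast Int.one_le_abs hd)
    simp only [hd, if_false, add_zero]
    nlinarith [hμ.nonneg r d]

theorem summable_mul (hμ : IsDeltaDensity b μ) {r : ℕ}
    (hsq : Summable fun d : ℤ => (d : ℝ) ^ 2 * μ r d) : Summable fun d : ℤ => (d : ℝ) * μ r d := by
  refine hsq.of_norm_bounded fun d => ?_
  rw [norm_mul, Real.norm_of_nonneg (hμ.nonneg r d)]
  have : |(d : ℝ)| ≤ (d : ℝ) ^ 2 := by exact_mod_cast Int.natAbs_le_self_sq d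
  exact mul_le_mul_of_nonneg_right (by simpa using this) (hμ.nonneg r d)

theorem hasSum_one (hμ : IsDeltaDensity b μ) (hb : 1 < b)
    (hsq : ∀ r, Summable fun d : ℤ => (d : ℝ) ^ 2 * μ r d) (r : ℕ) : HasSum (μ r) 1 := by
  set T : ℕ → ℝ := fun r => ∑' d, μ r d
  have hT : ∀ r, HasSum (μ r) (T r) := fun r => (hμ.summable (hsq r)).hasSum
  have hconst := apply_eq_apply_zero_of_pow_mul_eq_sum hb (F := T) fun j r _ => by
    have h := hμ.hasSum_mul_pow_mul_add hb (j := j) (r := 0) (a := r) (ψ := fun _ => 1)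
      fun c _ => by simpa using hT _
    simp only [one_mul, mul_zero, zero_add] at h
    rw [(hT r).unique h]
    field_simp
  have hT0 : T 0 = 1 := by
    simp only [T, funext hμ.zero_apply]
    exact (hasSum_ite_eq 0 1).tsum_eq
  simpa [hconst r, hT0] using hT r

theorem hasSum_intCast_mul_zero (hμ : IsDeltaDensity b μ) (hb : 1 < b)
    (hsq : ∀ r, Summable fun d : ℤ => (d : ℝ) ^ 2 * μ r d) (r : ℕ) :
    HasSum (fun d : ℤ => (d : ℝ) * μ r d) 0 := by
  set E : ℕ → ℝ := fun r => ∑' d : ℤ, (d : ℝ) * μ r d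
  have hE : ∀ r, HasSum (fun d : ℤ => (d : ℝ) * μ r d) (E r) :=
    fun r => (hμ.summable_mul (hsq r)).hasSum
  have hconst := apply_eq_apply_zero_of_pow_mul_eq_sum hb (F := E) fun j r _ => by
    have h := hμ.hasSum_mul_pow_mul_add hb (j := j) (r := 0) (a := r) (ψ := fun d => (d : ℝ))
      fun c _ => hasSum_intCast_add_mul (hμ.hasSum_one hb hsq _) (hE _) _
    simp only [mul_zero, zero_add, mul_one, sum_add_distrib] at h
    have hg : ∑ c ∈ range (b ^ j), (blockDelta b (b ^ j) r c : ℝ) = 0 := by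
      exact_mod_cast sum_blockDelta_eq_zero (b ^ j) r
    rw [(hE r).unique h, hg, add_zero]
    field_simp
  have hE0 : E 0 = 0 := by
    simp [E, funext hμ.zero_apply]
  simpa [hconst r, hE0] using hE r

theorem hasSum_sq_mul_pow_mul_add_one (hμ : IsDeltaDensity b μ) (hb : 1 < b) {V : ℕ → ℝ}
    (hV : ∀ r, HasSum (fun d : ℤ => (d : ℝ) ^ 2 * μ r d) (V r)) (r m : ℕ) :
    HasSum (fun d : ℤ => (d : ℝ) ^ 2 * μ (b ^ m * r + 1) d)
      ((((b : ℝ) ^ m - 1) * V r + V (r + 1) + (b : ℝ) ^ (m + 1) - b) / (b : ℝ) ^ m) := by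
  have hsq : ∀ r, Summable fun d : ℤ => (d : ℝ) ^ 2 * μ r d := fun r => (hV r).summable
  have h := hμ.hasSum_mul_pow_mul_add hb (j := m) (r := r) (a := 1) (ψ := fun d => (d : ℝ) ^ 2)
    fun c _ => hasSum_intCast_add_sq_mul (hμ.hasSum_one hb hsq _)
      (hμ.hasSum_intCast_mul_zero hb hsq _) (hV _) _
  convert h using 2
  simp only [mul_zero, add_zero, mul_one, sum_add_distrib,
    sum_range_add_one_div (fun k => V (r + k)) (by positivity : 0 < b ^ m)]
  have hsq_sum :
      ∑ c ∈ range (b ^ m), (blockDelta b (b ^ m) 1 c : ℝ) ^ 2 = (b : ℝ) ^ (m + 1) - b := by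
    exact_mod_cast sum_blockDelta_one_sq hb m
  rw [hsq_sum, nsmul_eq_mul, Nat.cast_pred (by positivity)]
  push_cast
  ring

end IsDeltaDensity

/-- **Lemma (variance with units digit `1` preceded by a block of `0`'s).** For every
`r̂ ∈ ℕ` and `m ≥ 1`,
`Var(μ^(b^m·r̂+1)) = (1-1/b^m)·Var(μ^(r̂)) + (1/b^m)·Var(μ^(r̂+1)) + b - 1/b^(m-1)`. -/
theorem variance_block_one (b : ℕ) (hb : 2 ≤ b)
    (μ : ℕ → ℤ → ℝ)
    (hμ : ∀ (r : ℕ) (d : ℤ),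
      Tendsto (fun N : ℕ =>
        (((Finset.range N).filter fun n => delta b r n = d).card : ℝ) / N)
        atTop (𝓝 (μ r d)))
    (V : ℕ → ℝ)
    (hV : ∀ r : ℕ, HasSum (fun d : ℤ => (d : ℝ) ^ 2 * μ r d) (V r))
    (rhat : ℕ) (m : ℕ) (hm : 1 ≤ m) :
    V (b ^ m * rhat + 1) =
      (1 - 1 / (b : ℝ) ^ m) * V rhat + (1 / (b : ℝ) ^ m) * V (rhat + 1) +
        (b : ℝ) - 1 / (b : ℝ) ^ (m - 1) := by
  rw [(hV _).unique (IsDeltaDensity.hasSum_sq_mul_pow_mul_add_one hμ hb hV rhat m)]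
  obtain ⟨k, rfl⟩ : ∃ k, m = k + 1 := ⟨m - 1, by omega⟩
  rw [Nat.add_sub_cancel]
  field_simp
  ring
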